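/- arXiv:1907.08581 — 5 statements merged into one kernel-verified Lean document; each statement's English description precedes it below -/
import Mathlib

section
/- Suppose θ ≤ ν are cardinals with ν regular uncountable, cf(θ) < θ, and for every regular μ < θ one has 𝒞(ν,μ) ≤ ν. Then 𝒞(ν,θ) ≤ 𝒟(ν,cf(θ)). -/
open Cardinal Set Ordinal

/-- `C` is unbounded in `α`. -/
def UnbIn (C : Set Ordinal) (α : Ordinal) : Prop :=
  ∀ β < α, ∃ γ ∈ C, β < γ ∧ γ < α

/-- `C` is closed in `α`: every nonzero limit point of `C` below `α` belongs to `C`. -/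
def ClosedIn (C : Set Ordinal) (α : Ordinal) : Prop :=
  ∀ β < α, 0 < β → UnbIn C β → β ∈ C

/-- `C` is a club (closed unbounded) subset of `α`. -/
def ClubIn (C : Set Ordinal) (α : Ordinal) : Prop :=
  C ⊆ Set.Iio α ∧ ClosedIn C α ∧ UnbIn C α

/-- `S` is stationary in `α`. -/
def StatIn (S : Set Ordinal) (α : Ordinal) : Prop :=
  ∀ C, ClubIn C α → (S ∩ C).Nonempty

/-- The trace of `S` below `κ`: ordinals of uncountable cofinality in which `S` reflects. -/
def Tr (κ : Ordinal) (S : Set Ordinal) : Set Ordinal :=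
  {β | β < κ ∧ Cardinal.aleph0 < β.cof ∧ StatIn (S ∩ Set.Iio β) β}

/-- `E^κ_θ`, the set of ordinals below `κ` of cofinality `θ`. -/
def Ecof (κ : Ordinal) (θ : Cardinal) : Set Ordinal :=
  {α | α < κ ∧ α.cof = θ}

/-- The set of accumulation points of `C` that belong to `C`. -/
def accSet (C : Set Ordinal) : Set Ordinal :=
  {β ∈ C | 0 < β ∧ UnbIn C β}

/-- The order type of a set of ordinals: the unique ordinal whose initial segment
order-embeds onto the set. -/
noncomputable def otp (x : Set Ordinal) : Ordinal :=
  sInf {o : Ordinal | ∃ f : Ordinal → Ordinal,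
    StrictMonoOn f (Set.Iio o) ∧ f '' Set.Iio o = x}

/-- The partition principle `Prt(S, θ, T)` (computed inside `κ`). -/
def Prt (κ : Ordinal) (S : Set Ordinal) (θ : Cardinal) (T : Set Ordinal) : Prop :=
  ∃ P : Ordinal → Set Ordinal,
    (∀ i < θ.ord, P i ⊆ S) ∧
    Set.PairwiseDisjoint (Set.Iio θ.ord) P ∧
    (S ⊆ ⋃ i ∈ Set.Iio θ.ord, P i) ∧
    StatIn (T ∩ ⋂ i ∈ Set.Iio θ.ord, Tr κ (P i)) κ

/-- The principle `SNR⁻(κ, ν, T)`. -/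
def SNRm (κ : Ordinal) (ν : Cardinal) (T : Set Ordinal) : Prop :=
  ∀ T₀ ⊆ T ∩ Ecof κ ν, StatIn T₀ κ →
    ∃ φ : Ordinal → Ordinal, (∀ β < κ, φ β < ν.ord) ∧
      StatIn {α ∈ T₀ | ∃ c, ClubIn c α ∧ StrictMonoOn φ c} κ

/-- The simultaneous partition principle `Prp(S, ν, T)` (computed inside `κ`). -/
def Prp (κ : Ordinal) (S : Set Ordinal) (ν : Cardinal) (T : Set Ordinal) : Prop :=
  ∀ θ : Cardinal, θ ≤ ν →
    ∀ Si : Ordinal → Set Ordinal, (∀ i < θ.ord, Si i ⊆ S) →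
      ∀ T' ⊆ T ∩ ⋂ i ∈ Set.Iio θ.ord, Tr κ (Si i), StatIn T' κ →
        ∃ I : Set Ordinal, I ⊆ Set.Iio θ.ord ∧ (∀ j < θ.ord, ∃ i ∈ I, j ≤ i) ∧
          ∃ S' : Ordinal → Set Ordinal,
            (∀ i ∈ I, S' i ⊆ Si i) ∧
            (∀ i ∈ I, StatIn (S' i) κ) ∧
            Set.PairwiseDisjoint I S' ∧
            StatIn (T' ∩ ⋂ i ∈ I, Tr κ (S' i)) κ

/-- `⟨lams, f⟩` is a scale for the singular cardinal `lam`. -/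
def IsScale (lam : Cardinal) (lams : Ordinal → Cardinal) (f : Ordinal → Ordinal → Ordinal) : Prop :=
  (∀ i < lam.ord.cof.ord, (lams i).IsRegular) ∧
  (∀ i < lam.ord.cof.ord, ∀ j < lam.ord.cof.ord, i < j → lams i < lams j) ∧
  (∀ i < lam.ord.cof.ord, lams i < lam) ∧
  (∀ c < lam, ∃ i < lam.ord.cof.ord, c < lams i) ∧
  (∀ γ < (Order.succ lam).ord, ∀ i < lam.ord.cof.ord, f γ i < (lams i).ord) ∧
  (∀ γ < (Order.succ lam).ord, ∀ δ < (Order.succ lam).ord, γ < δ →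
    ∃ i < lam.ord.cof.ord, ∀ j, i ≤ j → j < lam.ord.cof.ord → f γ j < f δ j) ∧
  (∀ g : Ordinal → Ordinal, (∀ i < lam.ord.cof.ord, g i < (lams i).ord) →
    ∃ γ < (Order.succ lam).ord, ∃ i < lam.ord.cof.ord,
      ∀ j, i ≤ j → j < lam.ord.cof.ord → g j < f γ j)

/-- `α` is a very good point of the scale `f`. -/
def VeryGoodAt (lam : Cardinal) (f : Ordinal → Ordinal → Ordinal) (α : Ordinal) : Prop :=
  ∃ C, ClubIn C α ∧ ∃ i < lam.ord.cof.ord,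
    ∀ γ ∈ C, ∀ δ ∈ C, γ < δ → ∀ j, i ≤ j → j < lam.ord.cof.ord → f γ j < f δ j

/-- The least size of a family of `θ`-sized subsets of `ν` such that every club
in `ν` contains a member of the family. -/
noncomputable def CC (ν θ : Cardinal) : Cardinal :=
  sInf { c : Cardinal | ∃ 𝒞 : Ordinal → Set Ordinal,
    (∀ i < c.ord, 𝒞 i ⊆ Set.Iio ν.ord ∧ (otp (𝒞 i)).card = θ) ∧
    ∀ b, ClubIn b ν.ord → ∃ i < c.ord, 𝒞 i ⊆ b }

/-- `𝒟(ν, μ) = cf([ν]^μ, ⊇)`: the least size of a family of `μ`-sized subsets of `ν`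
such that every `μ`-sized subset of `ν` contains a member of the family. -/
noncomputable def DD (ν μ : Cardinal) : Cardinal :=
  sInf { c : Cardinal | ∃ 𝒟 : Ordinal → Set Ordinal,
    (∀ i < c.ord, 𝒟 i ⊆ Set.Iio ν.ord ∧ (otp (𝒟 i)).card = μ) ∧
    ∀ a : Set Ordinal, a ⊆ Set.Iio ν.ord → (otp a).card = μ → ∃ i < c.ord, 𝒟 i ⊆ a }

/-!
Let `σ = cf θ`. Write `θ` as a `σ`-union of cardinals `θ_j`, `j < σ`: every union of `σ` many
sets, the `j`-th of size `θ_j`, has size `θ`. For infinite (hence singular) `θ`, take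
`θ_j = (|f j| + ℵ₀)⁺` along a fundamental sequence `f` of `θ`: these are regular and below `θ`,
so `𝒞(ν, θ_j) ≤ ν`. For finite `θ`, take `σ = 1` and `θ_0 = θ`: `[ν]^θ` has only `ν` members.

Fix club bases `F j i`, `i < ν`, for the `θ_j` and code `(j, i)` as `σ * i + j < ν`. A member `d`
of a cofinal family in `[ν]^σ` yields `⋃ {F j i | σ * i + j ∈ d}`. Given a club `b`, pick
`F j (ι j) ⊆ b` for every `j`; the `σ`-sized set of codes of the `(j, ι j)` contains some `d`,
whose union then lies in `b` and, being a union over `σ` many `j`, has size `θ`.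
-/

universe u v w

theorem exists_enum_of_lift_mk_le {α : Type w} {s : Set α} (hs : s.Nonempty) {c : Cardinal.{v}}
    (h : Cardinal.lift.{v} #s ≤ Cardinal.lift.{w} c) :
    ∃ f : Ordinal.{v} → α, (∀ i, f i ∈ s) ∧ ∀ x ∈ s, ∃ i < c.ord, f i = x := by
  have : Nonempty s := hs.to_subtype
  obtain ⟨e⟩ : Nonempty (s ↪ Iio c.ord) := lift_mk_le'.1 (by
    simpa [Cardinal.mk_Iio_ordinal, Cardinal.lift_umax] using Cardinal.lift_le.{v + 1}.2 h)
  have he : Function.Injective fun x : s => (e x : Ordinal.{v}) :=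
    fun _ _ hxy => e.injective (Subtype.ext hxy)
  set g := Function.invFun fun x : s => (e x : Ordinal.{v})
  refine ⟨fun i => (g i).1, fun i => (g i).2, fun x hx => ⟨e ⟨x, hx⟩, (e _).2, ?_⟩⟩
  exact congrArg Subtype.val (Function.leftInverse_invFun he ⟨x, hx⟩)

theorem succ_lt_of_cof_ord_lt {θ c : Cardinal.{u}} (hθ : θ.ord.cof < θ) (hc : ℵ₀ ≤ c)
    (hcθ : c < θ) : Order.succ c < θ := by
  refine (Order.succ_le_of_lt hcθ).lt_of_ne fun h => ?_
  rw [← h, (isRegular_succ hc).cof_ord] at hθ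
  exact hθ.false

theorem exists_mem_le_of_lift_le_mk {σ : Cardinal.{u}} {J : Set Ordinal.{u}}
    (hJ : Cardinal.lift.{u + 1} σ ≤ #J) {j₀ : Ordinal.{u}} (hj₀ : j₀ < σ.ord) :
    ∃ j ∈ J, j₀ ≤ j := by
  by_contra! h
  have : #J ≤ #(Iio j₀) := mk_le_mk_of_subset h
  rw [Cardinal.mk_Iio_ordinal] at this
  exact (lt_ord.1 hj₀).not_ge (Cardinal.lift_le.1 (hJ.trans this))

theorem cof_ord_eq_one_of_lt_aleph0 {θ : Cardinal.{u}} (hθ : θ ≠ 0) (hθω : θ < ℵ₀) :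
    θ.ord.cof = 1 := by
  obtain ⟨n, rfl⟩ := lt_aleph0.1 hθω
  obtain ⟨m, rfl⟩ := Nat.exists_eq_succ_of_ne_zero (show n ≠ 0 by rintro rfl; simp at hθ)
  rw [ord_natCast, Nat.cast_succ, cof_add_one]

theorem Ordinal.mul_add_mod_of_lt {a b c : Ordinal} (h : c < b) : (b * a + c) % b = c := by
  rw [mul_add_mod_self, mod_eq_of_lt h]

theorem Ordinal.mul_add_div_of_lt {a b c : Ordinal} (h : c < b) : (b * a + c) / b = a := by
  rw [mul_add_div a (zero_le.trans_lt h).ne' c, div_eq_zero_of_lt h, add_zero]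

theorem mul_add_lt_ord {σ ν : Cardinal.{u}} (hν : ℵ₀ ≤ ν) (hσν : σ < ν) {i j : Ordinal.{u}}
    (hj : j < σ.ord) (hi : i < ν.ord) : σ.ord * i + j < ν.ord :=
  calc σ.ord * i + j < σ.ord * i + σ.ord := (add_lt_add_iff_left _).2 hj
    _ = σ.ord * Order.succ i := (mul_succ _ _).symm
    _ < ν.ord := isPrincipal_mul_ord hν (ord_lt_ord.2 hσν) ((isSuccLimit_ord hν).succ_lt hi)

/-- `[ν]^μ`, with sizes measured by `otp` as in `CC` and `DD`. -/
def subsetsOfCard (ν μ : Cardinal.{u}) : Set (Set Ordinal.{u}) :=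
  {x | x ⊆ Iio ν.ord ∧ (otp x).card = μ}

def IsClubBase (ν μ : Cardinal.{u}) (α : Ordinal.{v}) (𝒞 : Ordinal.{v} → Set Ordinal.{u}) :
    Prop :=
  (∀ i < α, 𝒞 i ∈ subsetsOfCard ν μ) ∧ ∀ b, ClubIn b ν.ord → ∃ i < α, 𝒞 i ⊆ b

def IsSubsetBase (ν μ : Cardinal.{u}) (α : Ordinal.{v}) (𝒟 : Ordinal.{v} → Set Ordinal.{u}) :
    Prop :=
  (∀ i < α, 𝒟 i ∈ subsetsOfCard ν μ) ∧
    ∀ a : Set Ordinal.{u}, a ⊆ Iio ν.ord → (otp a).card = μ → ∃ i < α, 𝒟 i ⊆ a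

theorem exists_strictMonoOn_image_Iio_eq {x : Set Ordinal.{u}} {β : Ordinal.{u}}
    (hx : x ⊆ Iio β) :
    ∃ o : Ordinal.{u}, ∃ f : Ordinal.{u} → Ordinal.{u},
      StrictMonoOn f (Iio o) ∧ f '' Iio o = x := by
  set s := x ∪ Ici β
  have hs : ¬ BddAbove s := fun ⟨γ, hγ⟩ =>
    (Order.lt_succ γ).not_ge
      ((le_max_right β _).trans (hγ (Or.inr (show β ≤ _ from le_max_left _ _))))
  obtain ⟨o, ho⟩ := enumOrd_surjective hs (Or.inr self_mem_Ici : β ∈ s)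
  refine ⟨o, enumOrd s, (enumOrd_strictMono hs).strictMonoOn _, ?_⟩
  apply Subset.antisymm
  · rintro _ ⟨o', ho', rfl⟩
    have hlt : enumOrd s o' < β := ho ▸ enumOrd_strictMono hs ho'
    exact (enumOrd_mem hs o').resolve_right hlt.not_ge
  · intro ξ hξ
    obtain ⟨o', rfl⟩ := enumOrd_surjective hs (Or.inl hξ)
    exact ⟨o', (enumOrd_lt_enumOrd hs).1 (ho ▸ hx hξ), rfl⟩

theorem lift_card_otp {x : Set Ordinal.{u}} {β : Ordinal.{u}} (hx : x ⊆ Iio β) :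
    Cardinal.lift.{u + 1} (otp x : Ordinal.{u}).card = #x := by
  obtain ⟨f, hf, hfx⟩ : ∃ f : Ordinal.{u} → Ordinal.{u},
      StrictMonoOn f (Iio (otp x)) ∧ f '' Iio (otp x) = x :=
    csInf_mem (exists_strictMonoOn_image_Iio_eq hx)
  rw [← Cardinal.mk_Iio_ordinal, ← mk_image_eq_of_injOn _ _ hf.injOn, hfx]

section Bases

variable {ν μ : Cardinal.{u}}

theorem mem_subsetsOfCard {x : Set Ordinal.{u}} :
    x ∈ subsetsOfCard ν μ ↔ x ⊆ Iio ν.ord ∧ #x = Cardinal.lift.{u + 1} μ := by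
  refine and_congr_right fun hx => ?_
  rw [← lift_card_otp hx, Cardinal.lift_inj]

theorem Iio_ord_mem_subsetsOfCard (h : μ ≤ ν) :
    Iio μ.ord ∈ subsetsOfCard ν μ :=
  mem_subsetsOfCard.2 ⟨Iio_subset_Iio (ord_le_ord.2 h), by rw [Cardinal.mk_Iio_ordinal, card_ord]⟩

theorem lift_le_mk_of_unbIn (hν : ν.IsRegular) {b : Set Ordinal.{u}}
    (hb : UnbIn b ν.ord) : Cardinal.lift.{u + 1} ν ≤ #b := by
  have hcof : IsCofinal (Subtype.val ⁻¹' b : Set (Iio ν.ord)) := fun β => by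
    obtain ⟨γ, hγb, hβγ, hγν⟩ := hb β β.2
    exact ⟨⟨γ, hγν⟩, hγb, hβγ.le⟩
  calc Cardinal.lift.{u + 1} ν = Order.cof (Iio ν.ord) := by
        rw [Ordinal.cof_Iio, ← Ordinal.lift_cof, hν.cof_ord]
    _ ≤ #(Subtype.val ⁻¹' b : Set (Iio ν.ord)) := Order.cof_le hcof
    _ ≤ #b := mk_preimage_of_injective _ _ Subtype.val_injective

theorem ClubIn.exists_subset_mem_subsetsOfCard {b : Set Ordinal.{u}}
    (hb : ClubIn b ν.ord) (hν : ν.IsRegular) (hμν : μ ≤ ν) :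
    ∃ x ⊆ b, x ∈ subsetsOfCard ν μ := by
  obtain ⟨x, hxb, hx⟩ :=
    le_mk_iff_exists_subset.1 ((Cardinal.lift_le.2 hμν).trans (lift_le_mk_of_unbIn hν hb.2.2))
  exact ⟨x, hxb, mem_subsetsOfCard.2 ⟨hxb.trans hb.1, hx⟩⟩

theorem clubIn_Ioo (hν : ℵ₀ ≤ ν) {α : Ordinal.{u}} (hα : α < ν.ord) :
    ClubIn (Ioo α ν.ord) ν.ord := by
  have hlim := isSuccLimit_ord hν
  refine ⟨fun ξ hξ => hξ.2, fun β hβ hβ0 hunb => ?_, fun β hβ => ?_⟩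
  · obtain ⟨γ, hγ, -, hγβ⟩ := hunb 0 hβ0
    exact ⟨hγ.1.trans hγβ, hβ⟩
  · have hm : Order.succ (max α β) < ν.ord := hlim.succ_lt (max_lt hα hβ)
    exact ⟨_, ⟨(le_max_left α β).trans_lt (Order.lt_succ _), hm⟩,
      (le_max_right α β).trans_lt (Order.lt_succ _), hm⟩

theorem exists_isClubBase_of_lift_mk_le (hν : ν.IsRegular) (hμν : μ ≤ ν)
    {c : Cardinal.{v}} (h : Cardinal.lift.{v} #(subsetsOfCard ν μ) ≤ Cardinal.lift.{u + 1} c) :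
    ∃ 𝒞, IsClubBase ν μ c.ord 𝒞 := by
  obtain ⟨𝒞, h𝒞, hall⟩ := exists_enum_of_lift_mk_le ⟨_, Iio_ord_mem_subsetsOfCard hμν⟩ h
  refine ⟨𝒞, fun i _ => h𝒞 i, fun b hb => ?_⟩
  obtain ⟨x, hxb, hx⟩ := hb.exists_subset_mem_subsetsOfCard hν hμν
  obtain ⟨i, hi, rfl⟩ := hall x hx
  exact ⟨i, hi, hxb⟩

theorem exists_isSubsetBase_of_lift_mk_le (hμν : μ ≤ ν)
    {c : Cardinal.{v}} (h : Cardinal.lift.{v} #(subsetsOfCard ν μ) ≤ Cardinal.lift.{u + 1} c) :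
    ∃ 𝒟, IsSubsetBase ν μ c.ord 𝒟 := by
  obtain ⟨𝒟, h𝒟, hall⟩ := exists_enum_of_lift_mk_le ⟨_, Iio_ord_mem_subsetsOfCard hμν⟩ h
  refine ⟨𝒟, fun i _ => h𝒟 i, fun a ha hμ => ?_⟩
  obtain ⟨i, hi, rfl⟩ := hall a ⟨ha, hμ⟩
  exact ⟨i, hi, subset_rfl⟩

theorem mk_subsetsOfCard_le :
    #(subsetsOfCard ν μ) ≤ 2 ^ Cardinal.lift.{u + 1} ν :=
  calc #(subsetsOfCard ν μ) ≤ #(𝒫 (Iio ν.ord)) := mk_le_mk_of_subset fun _ hx => hx.1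
    _ = 2 ^ Cardinal.lift.{u + 1} ν := by rw [mk_powerset, Cardinal.mk_Iio_ordinal, card_ord]

theorem mk_subsetsOfCard_le_of_lt_aleph0 (hν : ℵ₀ ≤ ν) (hμ : μ < ℵ₀) :
    #(subsetsOfCard ν μ) ≤ Cardinal.lift.{u + 1} ν := by
  have : Infinite (Iio ν.ord) := by
    rw [infinite_iff, Cardinal.mk_Iio_ordinal, card_ord, aleph0_le_lift]
    exact hν
  have hsub : subsetsOfCard ν μ ⊆
      range fun t : Finset (Iio ν.ord) => Subtype.val '' (t : Set (Iio ν.ord)) := by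
    intro x hx
    obtain ⟨hxν, hxμ⟩ := mem_subsetsOfCard.1 hx
    have hfin : x.Finite := by
      rw [← lt_aleph0_iff_set_finite, hxμ, lift_lt_aleph0]
      exact hμ
    refine ⟨(hfin.preimage Subtype.val_injective.injOn).toFinset, ?_⟩
    dsimp only
    rw [Set.Finite.coe_toFinset]
    exact image_preimage_eq_of_subset (by rwa [Subtype.range_coe])
  calc #(subsetsOfCard ν μ) ≤ #(Finset (Iio ν.ord)) := (mk_le_mk_of_subset hsub).trans mk_range_le
    _ = Cardinal.lift.{u + 1} ν := by
      rw [mk_finset_of_infinite, Cardinal.mk_Iio_ordinal, card_ord]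

theorem CC_le_of_isClubBase {c : Cardinal.{v}} {𝒞 : Ordinal.{v} → Set Ordinal.{u}}
    (h : IsClubBase ν μ c.ord 𝒞) : CC ν μ ≤ c :=
  csInf_le' ⟨𝒞, h⟩

theorem exists_isClubBase_CC (h : ∃ (c : Cardinal.{v}) (𝒞 : Ordinal.{v} → Set Ordinal.{u}),
    IsClubBase ν μ c.ord 𝒞) : ∃ 𝒞, IsClubBase ν μ (CC.{u, u, v} ν μ).ord 𝒞 :=
  csInf_mem h

theorem exists_isSubsetBase_DD (h : ∃ (c : Cardinal.{v}) (𝒟 : Ordinal.{v} → Set Ordinal.{u}),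
    IsSubsetBase ν μ c.ord 𝒟) : ∃ 𝒟, IsSubsetBase ν μ (DD.{u, u, v} ν μ).ord 𝒟 :=
  csInf_mem h

theorem exists_isClubBase_of_forall_clubIn (hμν : μ ≤ ν) {α : Ordinal.{v}}
    {𝒞 : Ordinal.{v} → Set Ordinal.{u}}
    (h : ∀ b, ClubIn b ν.ord → ∃ i < α, 𝒞 i ∈ subsetsOfCard ν μ ∧ 𝒞 i ⊆ b) :
    ∃ 𝒞', IsClubBase ν μ α 𝒞' := by
  classical
  refine ⟨fun i => if 𝒞 i ∈ subsetsOfCard ν μ then 𝒞 i else Iio μ.ord, fun i _ => ?_,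
    fun b hb => ?_⟩
  · dsimp only
    split_ifs with hi
    exacts [hi, Iio_ord_mem_subsetsOfCard hμν]
  · obtain ⟨i, hi, hmem, hib⟩ := h b hb
    refine ⟨i, hi, ?_⟩
    dsimp only
    rwa [if_pos hmem]

theorem exists_isClubBase_of_CC_le (hν : ν.IsRegular) (hμν : μ ≤ ν) (h : CC ν μ ≤ ν) :
    ∃ 𝒞, IsClubBase ν μ ν.ord 𝒞 := by
  obtain ⟨𝒞, h𝒞⟩ := exists_isClubBase_CC ⟨_, exists_isClubBase_of_lift_mk_le hν hμν (c := 2 ^ ν)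
    (by rw [Cardinal.lift_id'.{u, u + 1}, Cardinal.lift_power, Cardinal.lift_two]
        exact mk_subsetsOfCard_le)⟩
  refine exists_isClubBase_of_forall_clubIn hμν (𝒞 := 𝒞) fun b hb => ?_
  obtain ⟨i, hi, hib⟩ := h𝒞.2 b hb
  exact ⟨i, hi.trans_le (ord_le_ord.2 h), h𝒞.1 i hi, hib⟩

theorem IsClubBase.lift_le_lift {c : Cardinal.{v}} {𝒞 : Ordinal.{v} → Set Ordinal.{u}}
    (h : IsClubBase ν μ c.ord 𝒞) (hν : ν.IsRegular) (hμ : μ ≠ 0) :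
    Cardinal.lift.{v} ν ≤ Cardinal.lift.{u} c := by
  have hne : ∀ i < c.ord, (𝒞 i).Nonempty := fun i hi => by
    rw [← nonempty_coe_sort, ← mk_ne_zero_iff, (mem_subsetsOfCard.1 (h.1 i hi)).2]
    simpa using hμ
  choose! pt hpt using hne
  have hunb : UnbIn (pt '' Iio c.ord) ν.ord := fun β hβ => by
    obtain ⟨i, hi, hsub⟩ := h.2 _ (clubIn_Ioo hν.aleph0_le hβ)
    exact ⟨pt i, mem_image_of_mem _ hi, (hsub (hpt i hi)).1, (hsub (hpt i hi)).2⟩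
  have := (Cardinal.lift_le.{v + 1}.2 (lift_le_mk_of_unbIn hν hunb)).trans
    (mk_image_le_lift (f := pt) (s := Iio c.ord))
  exact Cardinal.lift_le.{max (u + 1) (v + 1)}.1 (by simpa [Cardinal.mk_Iio_ordinal] using this)

theorem exists_isSubsetBase_of_isClubBase {σ : Cardinal.{u}} {c : Cardinal.{v}}
    {𝒞 : Ordinal.{v} → Set Ordinal.{u}} (h : IsClubBase ν μ c.ord 𝒞) (hν : ν.IsRegular)
    (hμ : μ ≠ 0) (hσν : σ ≤ ν) : ∃ 𝒟, IsSubsetBase ν σ (2 ^ c : Cardinal.{v}).ord 𝒟 := by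
  refine exists_isSubsetBase_of_lift_mk_le hσν ?_
  have hS := Cardinal.lift_le.{v}.2 (mk_subsetsOfCard_le (ν := ν) (μ := σ))
  have hνc := Cardinal.lift_le.{u + 1}.2 (h.lift_le_lift hν hμ)
  simp only [Cardinal.lift_lift, Cardinal.lift_power, Cardinal.lift_two] at hS hνc ⊢
  exact hS.trans (Cardinal.power_le_power_left two_ne_zero hνc)

/-- `DD` is `0` when its universe is too small to index a cofinal family; then so is `CC`, since a
club base has at least `ν` members. -/
theorem exists_isSubsetBase_DD_or_CC_eq_zero {θ σ : Cardinal.{u}} (hν : ν.IsRegular)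
    (hθ : θ ≠ 0) (hσν : σ ≤ ν) :
    (∃ 𝒟, IsSubsetBase ν σ (DD.{u, u, v} ν σ).ord 𝒟) ∨ CC.{u, u, v} ν θ = 0 := by
  by_cases hCC : ∃ (c : Cardinal.{v}) (𝒞 : Ordinal.{v} → Set Ordinal.{u}),
      IsClubBase ν θ c.ord 𝒞
  · obtain ⟨c, 𝒞, h𝒞⟩ := hCC
    exact Or.inl (exists_isSubsetBase_DD ⟨_, exists_isSubsetBase_of_isClubBase h𝒞 hν hθ hσν⟩)
  · exact Or.inr <| (congrArg sInf (eq_empty_iff_forall_notMem.2 fun c hc => hCC ⟨c, hc⟩)).trans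
      Cardinal.sInf_empty

end Bases

def UnionCardEq (σ : Cardinal.{u}) (θs : Ordinal.{u} → Cardinal.{u}) (θ : Cardinal.{u}) : Prop :=
  ∀ J ⊆ Iio σ.ord, #J = Cardinal.lift.{u + 1} σ → ∀ X : Ordinal.{u} → Set Ordinal.{u},
    (∀ j ∈ J, #(X j) = Cardinal.lift.{u + 1} (θs j)) → #(⋃ j ∈ J, X j) = Cardinal.lift.{u + 1} θ

theorem UnionCardEq.ne_zero {σ θ : Cardinal.{u}} {θs : Ordinal.{u} → Cardinal.{u}}
    (h : UnionCardEq σ θs θ) (hθ : θ ≠ 0) : σ ≠ 0 := by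
  rintro rfl
  have := h ∅ (empty_subset _) (by simp) (fun _ => ∅) (by simp)
  simp [eq_comm, hθ] at this

theorem exists_biUnion_mem_subsetsOfCard_subset {ν σ θ : Cardinal.{u}} (hν : ℵ₀ ≤ ν)
    (hσν : σ < ν) (hσ : σ ≠ 0) {θs : Ordinal.{u} → Cardinal.{u}} (hunion : UnionCardEq σ θs θ)
    {F : Ordinal.{u} → Ordinal.{u} → Set Ordinal.{u}}
    (hF : ∀ j < σ.ord, IsClubBase ν (θs j) ν.ord (F j)) {α : Ordinal.{v}}
    {𝒟 : Ordinal.{v} → Set Ordinal.{u}} (h𝒟 : IsSubsetBase ν σ α 𝒟) {b : Set Ordinal.{u}}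
    (hb : ClubIn b ν.ord) :
    ∃ k < α, (⋃ ξ ∈ 𝒟 k, F (ξ % σ.ord) (ξ / σ.ord)) ∈ subsetsOfCard ν θ ∧
      (⋃ ξ ∈ 𝒟 k, F (ξ % σ.ord) (ξ / σ.ord)) ⊆ b := by
  choose! ι hι using fun j hj => (hF j hj).2 b hb
  have hinj : InjOn (fun j => σ.ord * ι j + j) (Iio σ.ord) := fun j hj j' hj' h => by
    rw [← mul_add_mod_of_lt (a := ι j) hj, ← mul_add_mod_of_lt (a := ι j') hj']
    exact congrArg (· % σ.ord) h
  set a := (fun j => σ.ord * ι j + j) '' Iio σ.ord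
  have hmod : InjOn (· % σ.ord) a := by
    rintro _ ⟨j, hj, rfl⟩ _ ⟨j', hj', rfl⟩ h
    simp only [mul_add_mod_of_lt hj, mul_add_mod_of_lt hj'] at h
    rw [h]
  have ha : a ∈ subsetsOfCard ν σ := by
    refine mem_subsetsOfCard.2 ⟨image_subset_iff.2 fun j hj => ?_, ?_⟩
    · exact mul_add_lt_ord hν hσν hj (hι j hj).1
    · rw [mk_image_eq_of_injOn _ _ hinj, Cardinal.mk_Iio_ordinal, card_ord]
  obtain ⟨k, hk, hka⟩ := h𝒟.2 a ha.1 ha.2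
  set J := (· % σ.ord) '' 𝒟 k
  have hJ : J ⊆ Iio σ.ord := image_subset_iff.2 fun ξ _ => mod_lt ξ (ord_eq_zero.not.2 hσ)
  have hunion_eq : ⋃ ξ ∈ 𝒟 k, F (ξ % σ.ord) (ξ / σ.ord) = ⋃ j ∈ J, F j (ι j) := by
    rw [biUnion_image]
    refine iUnion₂_congr fun ξ hξ => ?_
    obtain ⟨j, hj, rfl⟩ := hka hξ
    rw [mul_add_mod_of_lt hj, mul_add_div_of_lt hj]
  have hsub : ⋃ j ∈ J, F j (ι j) ⊆ b := iUnion₂_subset fun j hj => (hι j (hJ hj)).2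
  have hJcard : #J = Cardinal.lift.{u + 1} σ := by
    rw [mk_image_eq_of_injOn _ _ (hmod.mono hka), (mem_subsetsOfCard.1 (h𝒟.1 k hk)).2]
  refine ⟨k, hk, ?_⟩
  rw [hunion_eq]
  refine ⟨mem_subsetsOfCard.2 ⟨hsub.trans hb.1, hunion J hJ hJcard _ fun j hj => ?_⟩, hsub⟩
  exact (mem_subsetsOfCard.1 ((hF j (hJ hj)).1 _ (hι j (hJ hj)).1)).2

theorem CC_le_DD_of_unionCardEq {ν σ θ : Cardinal.{u}} (hν : ν.IsRegular) (hσν : σ < ν)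
    (hθν : θ ≤ ν) (hθ : θ ≠ 0) {θs : Ordinal.{u} → Cardinal.{u}}
    (hθs : ∀ j < σ.ord, θs j ≤ ν ∧ CC ν (θs j) ≤ ν) (hunion : UnionCardEq σ θs θ) :
    CC.{u, u, v} ν θ ≤ DD ν σ := by
  rcases exists_isSubsetBase_DD_or_CC_eq_zero hν hθ hσν.le with ⟨𝒟, h𝒟⟩ | hCC
  · choose! F hF using fun j hj => exists_isClubBase_of_CC_le hν (hθs j hj).1 (hθs j hj).2
    obtain ⟨𝒞, h𝒞⟩ := exists_isClubBase_of_forall_clubIn hθν fun b hb =>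
      exists_biUnion_mem_subsetsOfCard_subset hν.aleph0_le hσν (hunion.ne_zero hθ) hunion hF h𝒟 hb
    exact CC_le_of_isClubBase h𝒞
  · rw [hCC]
    exact zero_le

theorem unionCardEq_one (θ : Cardinal.{u}) : UnionCardEq 1 (fun _ => θ) θ := by
  intro J hJ hJcard X hX
  have hJne : J.Nonempty := by
    rw [← nonempty_coe_sort, ← mk_ne_zero_iff, hJcard]
    simp
  obtain rfl : J = {0} :=
    hJne.subset_singleton_iff.1 fun j hj => Order.lt_one_iff.1 (ord_one ▸ hJ hj)
  simpa using hX 0 rfl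

theorem CC_le_of_lt_aleph0 {ν μ : Cardinal.{u}} (hν : ν.IsRegular) (hμν : μ ≤ ν) (hμ : μ < ℵ₀) :
    CC ν μ ≤ ν := by
  obtain ⟨𝒞, h𝒞⟩ := exists_isClubBase_of_lift_mk_le hν hμν (c := ν) (by
    rw [Cardinal.lift_id'.{u, u + 1}]
    exact mk_subsetsOfCard_le_of_lt_aleph0 hν.aleph0_le hμ)
  exact CC_le_of_isClubBase h𝒞

theorem unionCardEq_of_forall_lt {σ θ : Cardinal.{u}} {θs : Ordinal.{u} → Cardinal.{u}}
    (hθ : ℵ₀ ≤ θ) (hσθ : σ ≤ θ) (hθs : ∀ j < σ.ord, θs j ≤ θ)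
    (hlarge : ∀ c < θ, ∃ j₀ < σ.ord, ∀ j < σ.ord, j₀ ≤ j → c < θs j) :
    UnionCardEq σ θs θ := by
  intro J hJ hJcard X hX
  refine le_antisymm ?_ (le_of_forall_lt fun x hx => ?_)
  · calc #(⋃ j ∈ J, X j) ≤ #J * ⨆ j : J, #(X j) := mk_biUnion_le _ _
      _ ≤ Cardinal.lift.{u + 1} θ * Cardinal.lift.{u + 1} θ := by
        refine mul_le_mul' (hJcard.trans_le (Cardinal.lift_le.2 hσθ)) (ciSup_le' fun j => ?_)
        rw [hX j j.2]
        exact Cardinal.lift_le.2 (hθs j (hJ j.2))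
      _ = Cardinal.lift.{u + 1} θ := mul_eq_self (aleph0_le_lift.2 hθ)
  · obtain ⟨c, hc, rfl⟩ := Cardinal.lt_lift_iff.1 hx
    obtain ⟨j₀, hj₀, hlarge⟩ := hlarge c hc
    obtain ⟨j, hjJ, hj₀j⟩ := exists_mem_le_of_lift_le_mk hJcard.ge hj₀
    calc Cardinal.lift.{u + 1} c < Cardinal.lift.{u + 1} (θs j) :=
          Cardinal.lift_lt.2 (hlarge j (hJ hjJ) hj₀j)
      _ = #(X j) := (hX j hjJ).symm
      _ ≤ #(⋃ j ∈ J, X j) := mk_le_mk_of_subset (subset_biUnion_of_mem hjJ)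

theorem exists_regular_seq_of_cof_ord_lt {θ : Cardinal.{u}} (hθ : ℵ₀ ≤ θ)
    (hsing : θ.ord.cof < θ) : ∃ θs : Ordinal.{u} → Cardinal.{u},
      (∀ j < θ.ord.cof.ord, (θs j).IsRegular ∧ θs j < θ) ∧
      ∀ c < θ, ∃ j₀ < θ.ord.cof.ord, ∀ j < θ.ord.cof.ord, j₀ ≤ j → c < θs j := by
  have hθω : ℵ₀ < θ := hθ.lt_of_ne fun h => by
    rw [← h, isRegular_aleph0.cof_ord] at hsing
    exact hsing.false
  set σ := θ.ord.cof
  obtain ⟨f, hf⟩ := exists_isFundamentalSeq (a := σ.ord) (o := θ.ord) rfl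
  set θs : Ordinal.{u} → Cardinal.{u} := fun j =>
    if h : j < σ.ord then Order.succ (max ℵ₀ (f ⟨j, h⟩).1.card) else 0
  have hθs : ∀ j (hj : j < σ.ord), θs j = Order.succ (max ℵ₀ (f ⟨j, hj⟩).1.card) :=
    fun j hj => dif_pos hj
  refine ⟨θs, fun j hj => ⟨?_, ?_⟩, fun c hc => ?_⟩
  · rw [hθs j hj]
    exact isRegular_succ (le_max_left _ _)
  · rw [hθs j hj]
    exact succ_lt_of_cof_ord_lt hsing (le_max_left _ _) (max_lt hθω (lt_ord.1 (f _).2))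
  · obtain ⟨_, ⟨j₀, rfl⟩, hj₀⟩ := hf.isCofinal_range ⟨c.ord, ord_lt_ord.2 hc⟩
    refine ⟨j₀, j₀.2, fun j hj hle => ?_⟩
    have hcj : c.ord ≤ (f ⟨j, hj⟩).1 :=
      hj₀.trans (hf.strictMono.monotone (show j₀ ≤ ⟨j, hj⟩ from hle))
    rw [hθs j hj]
    exact ((ord_le.1 hcj).trans (le_max_right _ _)).trans_lt (Order.lt_succ _)

theorem statement2_general (ν θ : Cardinal) (hν : ν.IsRegular)
    (hθν : θ ≤ ν) (hsing : θ.ord.cof < θ)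
    (hreg : ∀ μ : Cardinal, μ.IsRegular → μ < θ → CC ν μ ≤ ν) :
    CC ν θ ≤ DD ν θ.ord.cof := by
  have hθ : θ ≠ 0 := by
    rintro rfl
    simp at hsing
  have hσν : θ.ord.cof < ν := hsing.trans_le hθν
  rcases lt_or_ge θ ℵ₀ with hθω | hθω
  · refine CC_le_DD_of_unionCardEq hν hσν hθν hθ (θs := fun _ => θ)
      (fun _ _ => ⟨hθν, CC_le_of_lt_aleph0 hν hθν hθω⟩) ?_
    rw [cof_ord_eq_one_of_lt_aleph0 hθ hθω]
    exact unionCardEq_one θ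
  · obtain ⟨θs, hθs, hlarge⟩ := exists_regular_seq_of_cof_ord_lt hθω hsing
    exact CC_le_DD_of_unionCardEq hν hσν hθν hθ
      (fun j hj => ⟨(hθs j hj).2.le.trans hθν, hreg _ (hθs j hj).1 (hθs j hj).2⟩)
      (unionCardEq_of_forall_lt hθω hsing.le (fun j hj => (hθs j hj).2.le) hlarge)

theorem statement2 (ν θ : Cardinal) (hν : ν.IsRegular) (hνu : Cardinal.aleph0 < ν)
    (hθν : θ ≤ ν) (hsing : θ.ord.cof < θ)
    (hreg : ∀ μ : Cardinal, μ.IsRegular → μ < θ → CC ν μ ≤ ν) :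
    CC ν θ ≤ DD ν θ.ord.cof :=
  statement2_general ν θ hν hθν hsing hreg
end

section
/- For any ordinal ζ of uncountable cofinality, there exists a map ψ_ζ : Ord → cf(ζ) with the following property: for every ordinal α with cf(α) = cf(ζ), every function f : α → Ord, and every stationary s ⊆ α such that f restricted to s is strictly increasing and converging to ζ, there exists a club c ⊆ α such that (ψ_ζ ∘ f) restricted to c ∩ s is strictly increasing. -/
/-!
Fix a fundamental sequence `(g i)_{i < cf ζ}` of `ζ` and let `ψ η` be the least `i` with
`η ≤ g i`. Then `ψ ∘ f` is monotone on `s`, and since `f` converges to `ζ`, every set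
`{γ ∈ s | ψ (f γ) ≤ ψ (f β)}` is bounded in `α`. The `δ < α` that lie above these bounds for all
`β ∈ s ∩ δ` form a club (closing off along an `ω`-sequence uses `cf α > ω`), and two points
`β < β'` of `s` in this club cannot have `ψ (f β) = ψ (f β')`.
-/

open Cardinal Set Ordinal

open Order

theorem clubIn_Ioo_s3 {α δ : Ordinal} (hα : IsSuccLimit α) (hδ : δ < α) : ClubIn (Ioo δ α) α := by
  refine ⟨fun _ hx ↦ hx.2, fun β hβ hβ₀ hunb ↦ ?_, fun β hβ ↦ ?_⟩
  · obtain ⟨γ, hγ, -, hγβ⟩ := hunb 0 hβ₀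
    exact ⟨hγ.1.trans hγβ, hβ⟩
  · have hlt : succ (max δ β) < α := hα.succ_lt (max_lt hδ hβ)
    exact ⟨succ (max δ β), ⟨(le_max_left δ β).trans_lt (lt_succ _), hlt⟩,
      (le_max_right δ β).trans_lt (lt_succ _), hlt⟩

theorem StatIn.unbIn {s : Set Ordinal} {α : Ordinal} (hα : IsSuccLimit α) (hs : StatIn s α) :
    UnbIn s α := fun _ hδ ↦
  let ⟨β, hβs, hβ⟩ := hs _ (clubIn_Ioo_s3 hα hδ)
  ⟨β, hβs, hβ⟩

theorem clubIn_setOf_forall_lt {α : Ordinal} (hα : ℵ₀ < α.cof) {R : Ordinal → Ordinal → Prop}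
    (hmono : ∀ β δ δ', R β δ → δ ≤ δ' → R β δ')
    (hbound : ∀ δ < α, ∃ δ' < α, ∀ β < δ, R β δ') :
    ClubIn {δ | δ < α ∧ ∀ β < δ, R β δ} α := by
  refine ⟨fun _ hδ ↦ hδ.1, fun δ hδ _ hunb ↦ ⟨hδ, fun β hβ ↦ ?_⟩, fun β₀ hβ₀ ↦ ?_⟩
  · obtain ⟨δ₁, hδ₁, hβδ₁, hδ₁δ⟩ := hunb β hβ
    exact hmono _ _ _ (hδ₁.2 β hβδ₁) hδ₁δ.le
  choose! G hGα hG using hbound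
  let seq : ℕ → Ordinal := fun n ↦ Nat.rec (succ β₀) (fun _ δ ↦ max δ (G δ)) n
  have hseq : ∀ n, seq n < α := by
    intro n
    induction n with
    | zero => exact (one_lt_cof_iff.1 (one_lt_aleph0.trans hα)).succ_lt hβ₀
    | succ n ih => exact max_lt ih (hGα _ ih)
  have hsup : ⨆ n, seq n < α := lift_iSup_lt_of_lt_cof (by simpa using hα) hseq
  have hle : ∀ n, seq n ≤ ⨆ n, seq n := Ordinal.le_iSup seq
  refine ⟨⨆ n, seq n, ⟨hsup, fun β hβ ↦ ?_⟩, (lt_succ β₀).trans_le (hle 0), hsup⟩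
  obtain ⟨n, hn⟩ := Ordinal.lt_iSup_iff.1 hβ
  exact hmono _ _ _ (hG _ (hseq n) β hn) ((le_max_right _ _).trans (hle (n + 1)))

theorem exists_clubIn_strictMonoOn_of_monotoneOn {α : Ordinal} (hα : ℵ₀ < α.cof)
    {s : Set Ordinal} {h : Ordinal → Ordinal} (hs : UnbIn s α) (hmono : MonotoneOn h s)
    (hbdd : ∀ β ∈ s, ∃ δ < α, ∀ γ ∈ s, h γ ≤ h β → γ < δ) :
    ∃ C, ClubIn C α ∧ StrictMonoOn h (C ∩ s) := by
  choose! bd hbdα hbd using hbdd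
  let R β δ := β ∈ s → ∀ γ ∈ s, h γ ≤ h β → γ < δ
  refine ⟨_, clubIn_setOf_forall_lt hα (R := R) ?_ ?_, ?_⟩
  · exact fun β δ δ' hR hδ hβ γ hγ hle ↦ (hR hβ γ hγ hle).trans_le hδ
  · intro δ hδ
    obtain ⟨β', hβ', hδβ', -⟩ := hs δ hδ
    refine ⟨bd β', hbdα β' hβ', fun β hβδ hβ γ hγ hle ↦ hbd β' hβ' γ hγ ?_⟩
    exact hle.trans (hmono hβ hβ' (hβδ.trans hδβ').le)
  · rintro β ⟨-, hβ⟩ β' ⟨hβ'C, hβ'⟩ hlt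
    refine (hmono hβ hβ' hlt.le).lt_of_not_ge fun hge ↦ ?_
    exact (hβ'C.2 β hlt hβ β' hβ' hge).false

theorem exists_cof_index_monotoneOn_bounded {ζ : Ordinal} (hζ : ζ ≠ 0) :
    ∃ ψ : Ordinal → Ordinal, (∀ η, ψ η < ζ.cof.ord) ∧ MonotoneOn ψ (Iio ζ) ∧
      ∀ i < ζ.cof.ord, ∃ ε < ζ, ∀ η < ζ, ψ η ≤ i → η ≤ ε := by
  set a := ζ.cof.ord
  obtain ⟨g, hg⟩ := exists_isFundamentalSeq (o := ζ) (a := a) rfl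
  have ha : 0 < a := by simpa [a, pos_iff_ne_zero] using hζ
  let G : Ordinal → Ordinal := fun i ↦ if hi : i < a then g ⟨i, hi⟩ else 0
  have hGζ : ∀ i < a, G i < ζ := fun i hi ↦ by simp only [G, dif_pos hi]; exact (g _).2
  have hGmono : MonotoneOn G (Iio a) := fun i (hi : i < a) j (hj : j < a) hij ↦ by
    simp only [G, dif_pos hi, dif_pos hj]
    exact hg.strictMono.monotone (Subtype.mk_le_mk.2 hij)
  have hGcof : ∀ η < ζ, ∃ i < a, η ≤ G i := fun η hη ↦ by
    obtain ⟨_, ⟨i, rfl⟩, hi⟩ := hg.isCofinal_range ⟨η, hη⟩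
    exact ⟨i, i.2, by simp only [G, dif_pos (show (i : Ordinal) < a from i.2)]; exact hi⟩
  -- for `η ≥ ζ` the set is empty and `ψ η = 0`, still below `cf ζ`
  let ψ : Ordinal → Ordinal := fun η ↦ sInf {i | i < a ∧ η ≤ G i}
  have hψa : ∀ η, ψ η < a := fun η ↦ by
    rcases eq_empty_or_nonempty {i | i < a ∧ η ≤ G i} with he | hne
    · simpa [ψ, he] using ha
    · exact (csInf_mem hne).1
  have hψG : ∀ η < ζ, η ≤ G (ψ η) := fun η hη ↦ by
    obtain ⟨i, hi, hηi⟩ := hGcof η hη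
    exact (csInf_mem (⟨i, hi, hηi⟩ : {i | i < a ∧ η ≤ G i}.Nonempty)).2
  have hψle : ∀ η, ∀ i < a, η ≤ G i → ψ η ≤ i := fun η i hi hηi ↦
    csInf_le' ⟨hi, hηi⟩
  refine ⟨ψ, hψa, fun η _ η' hη' hle ↦ hψle η _ (hψa η') (hle.trans (hψG η' hη')), ?_⟩
  exact fun i hi ↦ ⟨G i, hGζ i hi, fun η hη hψi ↦
    (hψG η hη).trans (hGmono (hψa η) hi hψi)⟩

theorem statement3 (ζ : Ordinal) (hζ : Cardinal.aleph0 < ζ.cof) :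
    ∃ ψ : Ordinal → Ordinal, (∀ η, ψ η < ζ.cof.ord) ∧
      ∀ α : Ordinal, α.cof = ζ.cof →
        ∀ f : Ordinal → Ordinal, ∀ s ⊆ Set.Iio α, StatIn s α →
          StrictMonoOn f s → (∀ β ∈ s, f β < ζ) → (∀ γ < ζ, ∃ β ∈ s, γ < f β) →
          ∃ C, ClubIn C α ∧ StrictMonoOn (ψ ∘ f) (C ∩ s) := by
  obtain ⟨ψ, hψ, hψmono, hψbdd⟩ :=
    exists_cof_index_monotoneOn_bounded (ζ := ζ) (by rintro rfl; simp at hζ)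
  refine ⟨ψ, hψ, fun α hα f s hsα hs hf hfζ hfcof ↦ ?_⟩
  have hαcof : ℵ₀ < α.cof := hα ▸ hζ
  have hαlim : IsSuccLimit α := one_lt_cof_iff.1 (one_lt_aleph0.trans hαcof)
  refine exists_clubIn_strictMonoOn_of_monotoneOn hαcof (hs.unbIn hαlim)
    (fun β hβ γ hγ hle ↦ hψmono (hfζ β hβ) (hfζ γ hγ) (hf.monotoneOn hβ hγ hle)) ?_
  intro β hβ
  obtain ⟨ε, hεζ, hε⟩ := hψbdd _ (hψ (f β))
  obtain ⟨β₁, hβ₁, hεβ₁⟩ := hfcof ε hεζ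
  exact ⟨β₁, hsα hβ₁, fun γ hγ hle ↦
    (hf.lt_iff_lt hγ hβ₁).1 ((hε _ (hfζ γ hγ) hle).trans_lt hεβ₁)⟩
end

section
/- Suppose ν < κ are regular uncountable cardinals, T ⊆ E^κ_ν, and there exists a function f : κ → ν such that T ∩ ⋃_{i<ν} Tr(f^{-1}{i}) is nonstationary. Then SNR⁻(κ,ν,T) holds: for every stationary T₀ ⊆ T ∩ E^κ_ν, there exists φ : κ → ν such that for stationarily many α ∈ T₀ there is a club c in α on which φ is strictly increasing. -/
open Cardinal Set Ordinal

/-!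
Take `φ = f`. Off a club `D ⊆ κ`, no fibre `f⁻¹{i}` reflects at a point of `T`, so at every
`α ∈ T₀ ∩ D` each fibre is avoided by a club `d i ⊆ α`. Pull the `d i` back along a continuous
cofinal map `e : ν → α`. In the regular cardinal `ν`, the diagonal intersection of the clubs
`e⁻¹(d i) ∩ (f (e i), ν)` is a club on which `f ∘ e` is strictly increasing: at a point `ξ` of
it, `f (e ξ)` avoids every `i < ξ`, so `f (e η) < ξ ≤ f (e ξ)` for `η < ξ`. Its image under
`e` is the required club in `α`.
-/

lemma UnbIn.mono {C D : Set Ordinal} {α : Ordinal} (h : UnbIn C α) (hCD : C ⊆ D) : UnbIn D α :=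
  fun β hβ => let ⟨γ, hγ, h1, h2⟩ := h β hβ; ⟨γ, hCD hγ, h1, h2⟩

lemma UnbIn.isSuccLimit {C : Set Ordinal} {α : Ordinal} (h : UnbIn C α) (hα : 0 < α) :
    Order.IsSuccLimit α := by
  rcases Ordinal.zero_or_succ_or_isSuccLimit α with rfl | ⟨β, rfl⟩ | hlim
  · exact absurd hα (lt_irrefl 0)
  · obtain ⟨γ, -, hβγ, hγ⟩ := h β (Order.lt_succ β)
    exact absurd (Order.lt_succ_iff.1 hγ) hβγ.not_ge
  · exact hlim

lemma exists_clubIn_inter_eq_empty {S : Set Ordinal} {α : Ordinal} (h : ¬ StatIn S α) :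
    ∃ C, ClubIn C α ∧ S ∩ C = ∅ := by
  simpa [StatIn, not_nonempty_iff_eq_empty] using h

lemma clubIn_Ioo_s8 {ν a : Ordinal} (hν : Order.IsSuccLimit ν) (ha : a < ν) :
    ClubIn (Ioo a ν) ν := by
  refine ⟨fun ξ hξ => hξ.2, fun β hβ h0 hunb => ?_, fun y hy => ?_⟩
  · obtain ⟨γ, hγ, -, hγβ⟩ := hunb 0 h0
    exact ⟨hγ.1.trans hγβ, hβ⟩
  · have hlt : max y a + 1 < ν := hν.add_one_lt (max_lt hy ha)
    exact ⟨max y a + 1, ⟨(le_max_right y a).trans_lt (lt_add_one _), hlt⟩,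
      (le_max_left y a).trans_lt (lt_add_one _), hlt⟩

lemma exists_cofinally_closed {α x : Ordinal} (hα : ℵ₀ < α.cof)
    {F : Ordinal → Ordinal} (hF : ∀ y < α, y < F y ∧ F y < α) (hx : x < α) :
    ∃ β, x < β ∧ β < α ∧ ∀ y < β, ∃ z < β, y ≤ z ∧ F z < β := by
  set s : ℕ → Ordinal := fun n => F^[n] x
  have hs_succ : ∀ n, s (n + 1) = F (s n) := fun n => Function.iterate_succ_apply' F n x
  have hs : ∀ n, s n < α := by
    intro n
    induction n with
    | zero => exact hx
    | succ n ih => exact hs_succ n ▸ (hF _ ih).2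
  have hs_lt : ∀ n, s n < ⨆ m, s m := fun n =>
    (hs_succ n ▸ (hF _ (hs n)).1).trans_le (Ordinal.le_iSup s (n + 1))
  refine ⟨⨆ n, s n, hs_lt 0, Ordinal.lift_iSup_lt_of_lt_cof (by simpa using hα) hs, fun y hy => ?_⟩
  obtain ⟨n, hn⟩ := Ordinal.lt_iSup_iff.1 hy
  exact ⟨s n, hs_lt n, hn.le, hs_succ n ▸ hs_lt (n + 1)⟩

lemma clubIn_inter {α : Ordinal} (hα : ℵ₀ < α.cof) {C D : Set Ordinal}
    (hC : ClubIn C α) (hD : ClubIn D α) : ClubIn (C ∩ D) α := by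
  refine ⟨inter_subset_left.trans hC.1, fun β hβ h0 hunb =>
    ⟨hC.2.1 β hβ h0 (hunb.mono inter_subset_left),
      hD.2.1 β hβ h0 (hunb.mono inter_subset_right)⟩, fun x hx => ?_⟩
  choose! wC hwC using hC.2.2
  choose! wD hwD using hD.2.2
  obtain ⟨β, hxβ, hβα, hβ⟩ := exists_cofinally_closed hα (F := fun y => max (wC y) (wD y))
    (fun y hy => ⟨lt_max_of_lt_left (hwC y hy).2.1, max_lt (hwC y hy).2.2 (hwD y hy).2.2⟩) hx
  have h0 : 0 < β := (zero_le (a := x)).trans_lt hxβ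
  refine ⟨β, ⟨hC.2.1 β hβα h0 fun y hy => ?_, hD.2.1 β hβα h0 fun y hy => ?_⟩, hxβ, hβα⟩
  · obtain ⟨z, hzβ, hyz, hFz⟩ := hβ y hy
    have hw := hwC z (hzβ.trans hβα)
    exact ⟨wC z, hw.1, hyz.trans_lt hw.2.1, (le_max_left _ _).trans_lt hFz⟩
  · obtain ⟨z, hzβ, hyz, hFz⟩ := hβ y hy
    have hw := hwD z (hzβ.trans hβα)
    exact ⟨wD z, hw.1, hyz.trans_lt hw.2.1, (le_max_right _ _).trans_lt hFz⟩

def diagInter (D : Ordinal → Set Ordinal) (ν : Ordinal) : Set Ordinal :=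
  {ξ | ξ < ν ∧ ∀ i < ξ, ξ ∈ D i}

lemma clubIn_diagInter {ν : Cardinal} (hν : ν.IsRegular) (hνu : ℵ₀ < ν)
    {D : Ordinal → Set Ordinal} (hD : ∀ i < ν.ord, ClubIn (D i) ν.ord) :
    ClubIn (diagInter D ν.ord) ν.ord := by
  refine ⟨fun ξ hξ => hξ.1, fun β hβ h0 hunb => ⟨hβ, fun i hi => ?_⟩, fun x hx => ?_⟩
  · refine (hD i (hi.trans hβ)).2.1 β hβ h0 fun y hy => ?_
    obtain ⟨γ, hγ, hyγ, hγβ⟩ := hunb (max y i) (max_lt hy hi)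
    exact ⟨γ, hγ.2 i ((le_max_right _ _).trans_lt hyγ), (le_max_left _ _).trans_lt hyγ, hγβ⟩
  have hνlim : Order.IsSuccLimit ν.ord := isSuccLimit_ord hνu.le
  have hcof : ν.ord.cof = ν := hν.cof_ord
  choose! w hw using fun i hi => (hD i hi).2.2
  set F : Ordinal → Ordinal := fun y => ⨆ i : Iio (y + 1), w i y
  have hwF : ∀ y, ∀ i ≤ y, w i y ≤ F y := fun y i hi =>
    Ordinal.le_iSup (fun i : Iio (y + 1) => w i y) ⟨i, Order.lt_add_one_iff.2 hi⟩
  have hF : ∀ y < ν.ord, y < F y ∧ F y < ν.ord := by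
    intro y hy
    refine ⟨(hw 0 hνlim.bot_lt y hy).2.1.trans_le (hwF y 0 (zero_le (a := y))), ?_⟩
    have hy1 : y + 1 < ν.ord := hνlim.add_one_lt hy
    refine Ordinal.lift_iSup_lt_of_lt_cof ?_ fun i => (hw i (i.2.trans hy1) y hy).2.2
    rw [Cardinal.mk_Iio_ordinal, ← Ordinal.lift_cof, hcof, Cardinal.lift_lift, Cardinal.lift_lt]
    exact Cardinal.lt_ord.1 hy1
  obtain ⟨β, hxβ, hβν, hβ⟩ := exists_cofinally_closed (by rwa [hcof]) hF hx
  refine ⟨β, ⟨hβν, fun i hi => ?_⟩, hxβ, hβν⟩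
  refine (hD i (hi.trans hβν)).2.1 β hβν ((zero_le (a := x)).trans_lt hxβ) fun y hy => ?_
  obtain ⟨z, hzβ, hyz, hFz⟩ := hβ (max y i) (max_lt hy hi)
  have hw' := hw i (hi.trans hβν) z (hzβ.trans hβν)
  exact ⟨w i z, hw'.1, ((le_max_left _ _).trans hyz).trans_lt hw'.2.1,
    (hwF z i ((le_max_right _ _).trans hyz)).trans_lt hFz⟩

lemma exists_clubIn_ord_strictMonoOn {ν : Cardinal} (hν : ν.IsRegular) (hνu : ℵ₀ < ν)
    {h : Ordinal → Ordinal} (hh : ∀ ξ < ν.ord, h ξ < ν.ord) {d : Ordinal → Set Ordinal}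
    (hd : ∀ i < ν.ord, ClubIn (d i) ν.ord) (hdh : ∀ i < ν.ord, ∀ ξ ∈ d i, h ξ ≠ i) :
    ∃ c, ClubIn c ν.ord ∧ StrictMonoOn h c := by
  have hνlim : Order.IsSuccLimit ν.ord := isSuccLimit_ord hνu.le
  have hcof : ℵ₀ < ν.ord.cof := by rwa [hν.cof_ord]
  refine ⟨diagInter (fun i => d i ∩ Ioo (h i) ν.ord) ν.ord,
    clubIn_diagInter hν hνu fun i hi => clubIn_inter hcof (hd i hi) (clubIn_Ioo_s8 hνlim (hh i hi)),
    fun η hη ξ hξ hηξ => ?_⟩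
  have hle : ξ ≤ h ξ := not_lt.1 fun hlt =>
    hdh (h ξ) (hh ξ hξ.1) ξ (hξ.2 (h ξ) hlt).1 rfl
  exact (hξ.2 η hηξ).2.1.trans_le hle

structure IsNormalCofinal (e : Ordinal → Ordinal) (ν α : Ordinal) : Prop where
  strictMonoOn : StrictMonoOn e (Iio ν)
  mapsTo : MapsTo e (Iio ν) (Iio α)
  cofinal : ∀ x < α, ∃ ξ < ν, x < e ξ
  continuous : ∀ ξ < ν, Order.IsSuccLimit ξ → ∀ y < e ξ, ∃ η < ξ, y < e η

lemma exists_strictMonoOn_cofinal {α : Ordinal} :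
    ∃ E : Ordinal → Ordinal, StrictMonoOn E (Iio α.cof.ord) ∧
      MapsTo E (Iio α.cof.ord) (Iio α) ∧ ∀ x < α, ∃ ξ < α.cof.ord, x ≤ E ξ := by
  obtain ⟨E, hE⟩ := Ordinal.exists_isFundamentalSeq (o := α) rfl
  set E' : Ordinal → Ordinal := fun ξ => if h : ξ < α.cof.ord then E ⟨ξ, h⟩ else 0
  have hE' : ∀ ξ (hξ : ξ < α.cof.ord), E' ξ = E ⟨ξ, hξ⟩ := fun ξ hξ => dif_pos hξ
  refine ⟨E', fun η hη ξ hξ hlt => ?_, fun ξ hξ => ?_, fun x hx => ?_⟩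
  · rw [hE' η hη, hE' ξ hξ]
    exact hE.strictMono (show (⟨η, hη⟩ : Iio _) < ⟨ξ, hξ⟩ from hlt)
  · rw [mem_Iio, hE' ξ hξ]
    exact (E ⟨ξ, hξ⟩).2
  · obtain ⟨_, ⟨⟨ξ, hξ⟩, rfl⟩, hle⟩ := hE.isCofinal_range ⟨x, hx⟩
    exact ⟨ξ, hξ, (hE' ξ hξ).symm ▸ hle⟩

lemma exists_isNormalCofinal {α : Ordinal} (hα : ℵ₀ ≤ α.cof) :
    ∃ e, IsNormalCofinal e α.cof.ord α := by
  obtain ⟨E, hEmono, hEmaps, hEcof⟩ := exists_strictMonoOn_cofinal (α := α)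
  set ν := α.cof.ord
  have hν : Order.IsSuccLimit ν := isSuccLimit_ord hα
  let e : Ordinal → Ordinal := fun ξ => ⨆ η : Iio ξ, E η + 1
  have he_ge : ∀ ξ, ∀ η < ξ, E η + 1 ≤ e ξ := fun ξ η hη =>
    Ordinal.le_iSup (fun η : Iio ξ => E η + 1) ⟨η, hη⟩
  have he_le : ∀ ξ < ν, e ξ ≤ E ξ := fun ξ hξ => Ordinal.iSup_le fun η =>
    Order.add_one_le_of_lt (hEmono (η.2.trans hξ) hξ η.2)
  refine ⟨e, ⟨fun η hη ξ hξ hlt => ?_, fun ξ hξ => (he_le ξ hξ).trans_lt (hEmaps hξ),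
    fun x hx => ?_, fun ξ _ hlim y hy => ?_⟩⟩
  · exact (he_le η hη).trans_lt ((lt_add_one _).trans_le (he_ge ξ η hlt))
  · obtain ⟨ξ, hξ, hxE⟩ := hEcof x hx
    exact ⟨ξ + 1, hν.add_one_lt hξ,
      hxE.trans_lt ((lt_add_one _).trans_le (he_ge _ ξ (lt_add_one ξ)))⟩
  · obtain ⟨⟨η, hη⟩, hyη⟩ := Ordinal.lt_iSup_iff.1 hy
    exact ⟨η + 1, hlim.add_one_lt hη, hyη.trans_le (he_ge _ η (lt_add_one η))⟩

namespace IsNormalCofinal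

variable {e : Ordinal → Ordinal} {ν α : Ordinal}

lemma closedIn_image (he : IsNormalCofinal e ν α) {c : Set Ordinal} (hc : ClubIn c ν) :
    ClosedIn (e '' c) α := by
  intro β hβ h0 hunb
  have hlt_iff : ∀ {η ξ}, η ∈ c → ξ < ν → (e η < e ξ ↔ η < ξ) := fun hη hξ =>
    he.strictMonoOn.lt_iff_lt (hc.1 hη) hξ
  obtain ⟨η₀, hη₀, hβη₀⟩ := he.cofinal β hβ
  set S := {ζ ∈ c | e ζ < β}
  have hS_lt : ∀ ζ ∈ S, ζ < η₀ := fun ζ hζ => (hlt_iff hζ.1 hη₀).1 (hζ.2.trans hβη₀)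
  have hS_bdd : BddAbove S := ⟨η₀, fun ζ hζ => (hS_lt ζ hζ).le⟩
  obtain ⟨_, ⟨ζ₀, hζ₀, rfl⟩, -, hζ₀β⟩ := hunb 0 h0
  have hζ₀S : ζ₀ ∈ S := ⟨hζ₀, hζ₀β⟩
  -- `S` has no largest element, so its supremum is a limit of `c`
  have hS_sup : ∀ ζ ∈ S, ζ < sSup S := by
    intro ζ hζ
    obtain ⟨_, ⟨ζ', hζ', rfl⟩, hlt, hζ'β⟩ := hunb (e ζ) hζ.2
    exact ((hlt_iff hζ.1 (hc.1 hζ')).1 hlt).trans_le (le_csSup hS_bdd ⟨hζ', hζ'β⟩)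
  have hξν : sSup S < ν := (csSup_le ⟨ζ₀, hζ₀S⟩ fun ζ hζ => (hS_lt ζ hζ).le).trans_lt hη₀
  have hunbξ : UnbIn c (sSup S) := fun y hy =>
    let ⟨ζ, hζ, hyζ⟩ := exists_lt_of_lt_csSup ⟨ζ₀, hζ₀S⟩ hy
    ⟨ζ, hζ.1, hyζ, hS_sup ζ hζ⟩
  have hξpos : 0 < sSup S := (zero_le (a := ζ₀)).trans_lt (hS_sup ζ₀ hζ₀S)
  have hξc : sSup S ∈ c := hc.2.1 _ hξν hξpos hunbξ
  refine ⟨sSup S, hξc, le_antisymm (le_of_forall_lt fun y hy => ?_) ?_⟩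
  · obtain ⟨η, hηξ, hyη⟩ := he.continuous _ hξν (hunbξ.isSuccLimit hξpos) y hy
    obtain ⟨ζ, hζ, hηζ⟩ := exists_lt_of_lt_csSup ⟨ζ₀, hζ₀S⟩ hηξ
    exact hyη.trans ((he.strictMonoOn (hηξ.trans hξν) (hc.1 hζ.1) hηζ).trans hζ.2)
  · exact not_lt.1 fun hlt => (hS_sup _ ⟨hξc, hlt⟩).false

lemma clubIn_image (he : IsNormalCofinal e ν α) {c : Set Ordinal} (hc : ClubIn c ν) :
    ClubIn (e '' c) α := by
  refine ⟨fun _ ⟨ξ, hξ, hξe⟩ => hξe ▸ he.mapsTo (hc.1 hξ), he.closedIn_image hc, fun x hx => ?_⟩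
  obtain ⟨ξ, hξ, hxξ⟩ := he.cofinal x hx
  obtain ⟨ζ, hζ, hξζ, hζν⟩ := hc.2.2 ξ hξ
  exact ⟨e ζ, ⟨ζ, hζ, rfl⟩, hxξ.trans (he.strictMonoOn hξ hζν hξζ), he.mapsTo hζν⟩

lemma clubIn_preimage (he : IsNormalCofinal e ν α) (hν : Order.IsSuccLimit ν)
    (hα : ℵ₀ < α.cof) {d : Set Ordinal} (hd : ClubIn d α) :
    ClubIn (Iio ν ∩ e ⁻¹' d) ν := by
  refine ⟨inter_subset_left, fun ξ hξ h0 hunb => ⟨hξ, ?_⟩, fun ξ hξ => ?_⟩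
  · refine hd.2.1 (e ξ) (he.mapsTo hξ)
      ((zero_le (a := e 0)).trans_lt (he.strictMonoOn (hξ.trans' h0) hξ h0)) fun y hy => ?_
    obtain ⟨η, hηξ, hyη⟩ := he.continuous ξ hξ (hunb.isSuccLimit h0) y hy
    obtain ⟨ζ, ⟨hζν, hζd⟩, hηζ, hζξ⟩ := hunb η hηξ
    exact ⟨e ζ, hζd, hyη.trans (he.strictMonoOn (hηξ.trans hξ) hζν hηζ),
      he.strictMonoOn hζν hξ hζξ⟩
  -- `e '' (0, ν)` is club in `α`, so it meets `d` above `e ξ`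
  obtain ⟨_, ⟨⟨ζ, hζ, rfl⟩, hζd⟩, hξζ, -⟩ :=
    (clubIn_inter hα (he.clubIn_image (clubIn_Ioo_s8 hν hν.bot_lt)) hd).2.2 (e ξ) (he.mapsTo hξ)
  exact ⟨ζ, ⟨hζ.2, hζd⟩, (he.strictMonoOn.lt_iff_lt hξ hζ.2).1 hξζ, hζ.2⟩

end IsNormalCofinal

lemma exists_clubIn_strictMonoOn {ν : Cardinal} (hν : ν.IsRegular) (hνu : ℵ₀ < ν)
    {α : Ordinal} (hα : α.cof = ν) {f : Ordinal → Ordinal} (hf : ∀ β < α, f β < ν.ord)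
    {d : Ordinal → Set Ordinal} (hd : ∀ i < ν.ord, ClubIn (d i) α)
    (hdf : ∀ i < ν.ord, ∀ β ∈ d i, f β ≠ i) :
    ∃ c, ClubIn c α ∧ StrictMonoOn f c := by
  have hcof : ℵ₀ < α.cof := hα ▸ hνu
  obtain ⟨e, he⟩ := exists_isNormalCofinal hcof.le
  rw [hα] at he
  obtain ⟨c, hc, hmono⟩ := exists_clubIn_ord_strictMonoOn hν hνu (h := f ∘ e)
    (fun ξ hξ => hf _ (he.mapsTo hξ)) (d := fun i => Iio ν.ord ∩ e ⁻¹' d i)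
    (fun i hi => he.clubIn_preimage (isSuccLimit_ord hνu.le) hcof (hd i hi))
    (fun i hi ξ hξ => hdf i hi _ hξ.2)
  refine ⟨e '' c, he.clubIn_image hc, ?_⟩
  rintro _ ⟨η, hη, rfl⟩ _ ⟨ξ, hξ, rfl⟩ hlt
  exact hmono hη hξ ((he.strictMonoOn.lt_iff_lt (hc.1 hη) (hc.1 hξ)).1 hlt)

theorem statement8_general (ν κ : Cardinal) (hν : ν.IsRegular) (hνu : Cardinal.aleph0 < ν)
    (hκ : κ.IsRegular) (hκu : Cardinal.aleph0 < κ)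
    (T : Set Ordinal)
    (f : Ordinal → Ordinal) (hf : ∀ β < κ.ord, f β < ν.ord)
    (hns : ¬ StatIn (T ∩ ⋃ i ∈ Set.Iio ν.ord, Tr κ.ord {β | f β = i}) κ.ord) :
    SNRm κ.ord ν T := by
  intro T₀ hT₀ hT₀stat
  refine ⟨f, hf, fun C hC => ?_⟩
  obtain ⟨D, hD, hTD⟩ := exists_clubIn_inter_eq_empty hns
  obtain ⟨α, hαT₀, hαC, hαD⟩ :=
    hT₀stat (C ∩ D) (clubIn_inter (by rwa [hκ.cof_ord]) hC hD)
  obtain ⟨hαT, hακ, hαν⟩ := hT₀ hαT₀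
  have hnot : ∀ i < ν.ord, ¬ StatIn ({β | f β = i} ∩ Iio α) α := fun i hi hstat =>
    (hTD ▸ ⟨⟨hαT, mem_biUnion hi ⟨hακ, hαν ▸ hνu, hstat⟩⟩, hαD⟩ : α ∈ (∅ : Set Ordinal))
  choose! d hd hdf using fun i hi => exists_clubIn_inter_eq_empty (hnot i hi)
  obtain ⟨c, hc, hmono⟩ := exists_clubIn_strictMonoOn hν hνu hαν
    (fun β hβ => hf β (hβ.trans hακ)) hd
    (fun i hi β hβ hfβ => (hdf i hi).subset ⟨⟨hfβ, (hd i hi).1 hβ⟩, hβ⟩)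
  exact ⟨α, ⟨hαT₀, c, hc, hmono⟩, hαC⟩

theorem statement8 (ν κ : Cardinal) (hν : ν.IsRegular) (hνu : Cardinal.aleph0 < ν)
    (hκ : κ.IsRegular) (hκu : Cardinal.aleph0 < κ) (hνκ : ν < κ)
    (T : Set Ordinal) (hT : T ⊆ Ecof κ.ord ν)
    (f : Ordinal → Ordinal) (hf : ∀ β < κ.ord, f β < ν.ord)
    (hns : ¬ StatIn (T ∩ ⋃ i ∈ Set.Iio ν.ord, Tr κ.ord {β | f β = i}) κ.ord) :
    SNRm κ.ord ν T :=
  statement8_general ν κ hν hνu hκ hκu T f hf hns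
end

section
/- Suppose ν < κ are regular uncountable cardinals, α < κ with cf(α) = ν, f : κ → ν is a function, and for each i < ν, c^i_α is a club in α disjoint from f^{-1}{i}. Then there exists a club c ⊆ α on which f is strictly increasing. -/
/-! Put `d γ = ⋂_{i ≤ f γ} c i`, a club in `α` because `f γ < ν = cf α`. If `C` is a club with
`β ∈ d γ` whenever `γ < β` lie in `C`, then `f β ≠ i` for all `i ≤ f γ`, so `f` increases on `C`.
Such a `C` is the range of the sequence `⟨b j : j < cf α⟩` in which `b j` is the least point of
`⋂_{k<j} d (b k)` above all `b k` and `G k` (`k < j`), for a cofinal `G : cf α → α`. Fewer than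
`cf α` clubs meet in a club, so `b j` exists; and a limit point of the range is itself such a
least point, by closedness of the `d (b k)`, so the range is closed. -/

open Cardinal Set Ordinal

theorem iSup_Iio_lt_of_card_lt_cof {δ α : Ordinal} (hδ : δ.card < α.cof)
    {g : Ordinal → Ordinal} (hg : ∀ i < δ, g i < α) : ⨆ i : Iio δ, g i < α := by
  refine lift_iSup_lt_of_lt_cof ?_ fun i => hg i i.2
  simpa [Cardinal.mk_Iio_ordinal, ← lift_cof, ← Ordinal.lift_card] using hδ

theorem exists_cofinal_seq (α : Ordinal) : ∃ G : Ordinal → Ordinal,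
    (∀ k < α.cof.ord, G k < α) ∧ ∀ x < α, ∃ k < α.cof.ord, x ≤ G k := by
  obtain ⟨F, hF⟩ := exists_isFundamentalSeq (o := α) rfl
  refine ⟨fun k => if h : k < α.cof.ord then F ⟨k, h⟩ else 0,
    fun k hk => by dsimp only; rw [dif_pos hk]; exact (F ⟨k, hk⟩).2, fun x hx => ?_⟩
  obtain ⟨_, ⟨k, rfl⟩, hxk⟩ := hF.isCofinal_range ⟨x, hx⟩
  exact ⟨k, k.2, by dsimp only; rw [dif_pos (mem_Iio.1 k.2)]; exact hxk⟩

section Clubs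

variable {α δ : Ordinal} {D : Ordinal → Set Ordinal}

theorem closedIn_biInter (hD : ∀ i < δ, ClosedIn (D i) α) :
    ClosedIn (Iio α ∩ ⋂ i ∈ Iio δ, D i) α := by
  intro β hβ hβ0 hunb
  refine ⟨hβ, mem_iInter₂.2 fun i hi => hD i hi β hβ hβ0 fun y hy => ?_⟩
  obtain ⟨γ, hγ, hyγ, hγβ⟩ := hunb y hy
  exact ⟨γ, mem_iInter₂.1 hγ.2 i hi, hyγ, hγβ⟩

theorem unbIn_biInter (hα : ℵ₀ < α.cof) (hδ : δ.card < α.cof) (hD : ∀ i < δ, ClubIn (D i) α) :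
    UnbIn (Iio α ∩ ⋂ i ∈ Iio δ, D i) α := by
  have hαlim : Order.IsSuccLimit α := Ordinal.one_lt_cof_iff.1 (one_lt_aleph0.trans hα)
  set next : Ordinal → Ordinal → Ordinal := fun i x => sInf (D i ∩ Ioo x α)
  have next_mem : ∀ i < δ, ∀ x < α, next i x ∈ D i ∩ Ioo x α := fun i hi x hx =>
    csInf_mem (by obtain ⟨γ, hγ, h1, h2⟩ := (hD i hi).2.2 x hx; exact ⟨γ, hγ, h1, h2⟩)
  set step : Ordinal → Ordinal := fun x => max (Order.succ x) (⨆ i : Iio δ, next i x)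
  have lt_step : ∀ x, x < step x := fun x => (Order.lt_succ x).trans_le (le_max_left _ _)
  have step_lt : ∀ x < α, step x < α := fun x hx =>
    max_lt (hαlim.succ_lt hx) (iSup_Iio_lt_of_card_lt_cof hδ fun i hi => (next_mem i hi x hx).2.2)
  have next_le_step : ∀ i < δ, ∀ x, next i x ≤ step x := fun i hi x =>
    (Ordinal.le_iSup (fun i : Iio δ => next i x) ⟨i, hi⟩).trans (le_max_right _ _)
  have iterate_lt : ∀ β n, step^[n] β < nfp step β := fun β n => (lt_step _).trans_le <| by
    simpa [Function.iterate_succ_apply'] using iterate_le_nfp step β (n + 1)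
  intro β hβ
  have hx : nfp step β < α := nfp_lt_ord hα step_lt hβ
  refine ⟨nfp step β, ⟨hx, mem_iInter₂.2 fun i hi => ?_⟩, iterate_lt β 0, hx⟩
  refine (hD i hi).2.1 _ hx ((zero_le (a := β)).trans_lt (iterate_lt β 0)) fun y hy => ?_
  obtain ⟨n, hn⟩ := lt_nfp_iff.1 hy
  have hz := next_mem i hi _ ((iterate_lt β n).trans hx)
  refine ⟨_, hz.1, hn.trans hz.2.1, (next_le_step i hi _).trans_lt ?_⟩
  simpa [Function.iterate_succ_apply'] using iterate_lt β (n + 1)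

theorem clubIn_biInter (hα : ℵ₀ < α.cof) (hδ : δ.card < α.cof) (hD : ∀ i < δ, ClubIn (D i) α) :
    ClubIn (Iio α ∩ ⋂ i ∈ Iio δ, D i) α :=
  ⟨inter_subset_left, closedIn_biInter fun i hi => (hD i hi).2.1, unbIn_biInter hα hδ hD⟩

end Clubs

noncomputable def diagSeq (α : Ordinal) (G : Ordinal → Ordinal) (D : Ordinal → Set Ordinal)
    (j : Ordinal) : Ordinal :=
  sInf {x | x < α ∧ ∀ k < j, G k < x ∧ diagSeq α G D k < x ∧ x ∈ D (diagSeq α G D k)}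
termination_by j

section DiagSeq

variable {α : Ordinal} {G : Ordinal → Ordinal} {D : Ordinal → Set Ordinal}

theorem diagSeq_le {j x : Ordinal} (hx : x < α)
    (h : ∀ k < j, G k < x ∧ diagSeq α G D k < x ∧ x ∈ D (diagSeq α G D k)) :
    diagSeq α G D j ≤ x := by
  rw [diagSeq]
  exact csInf_le' ⟨hx, h⟩

theorem diagSeq_spec (hα : ℵ₀ < α.cof) (hG : ∀ k < α.cof.ord, G k < α)
    (hD : ∀ γ < α, ClubIn (D γ) α) {j : Ordinal} (hj : j < α.cof.ord) :
    diagSeq α G D j < α ∧ ∀ k < j,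
      G k < diagSeq α G D j ∧ diagSeq α G D k < diagSeq α G D j ∧
        diagSeq α G D j ∈ D (diagSeq α G D k) := by
  induction j using WellFoundedLT.induction with | _ j ih =>
  have hjcard : j.card < α.cof := Cardinal.lt_ord.1 hj
  have hlt : ∀ k < j, diagSeq α G D k < α := fun k hk => (ih k hk (hk.trans hj)).1
  have hsup : ⨆ k : Iio j, max (G k) (diagSeq α G D k) < α :=
    iSup_Iio_lt_of_card_lt_cof hjcard fun k hk => max_lt (hG k (hk.trans hj)) (hlt k hk)
  obtain ⟨x, ⟨hxα, hxD⟩, hsupx, -⟩ :=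
    (clubIn_biInter hα hjcard fun k hk => hD _ (hlt k hk)).2.2 _ hsup
  suffices h : diagSeq α G D j ∈
      {x | x < α ∧ ∀ k < j, G k < x ∧ diagSeq α G D k < x ∧ x ∈ D (diagSeq α G D k)} from h
  rw [diagSeq]
  refine csInf_mem ⟨x, hxα, fun k hk => ?_⟩
  have hkx : max (G k) (diagSeq α G D k) < x :=
    (Ordinal.le_iSup (fun k : Iio j => max (G k) (diagSeq α G D k)) ⟨k, hk⟩).trans_lt hsupx
  exact ⟨(le_max_left _ _).trans_lt hkx, (le_max_right _ _).trans_lt hkx, mem_iInter₂.1 hxD k hk⟩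

theorem strictMonoOn_diagSeq (hα : ℵ₀ < α.cof) (hG : ∀ k < α.cof.ord, G k < α)
    (hD : ∀ γ < α, ClubIn (D γ) α) : StrictMonoOn (diagSeq α G D) (Iio α.cof.ord) :=
  fun _ _ _ hj hkj => ((diagSeq_spec hα hG hD hj).2 _ hkj).2.1

theorem unbIn_image_diagSeq (hα : ℵ₀ < α.cof) (hG : ∀ k < α.cof.ord, G k < α)
    (hG' : ∀ x < α, ∃ k < α.cof.ord, x ≤ G k) (hD : ∀ γ < α, ClubIn (D γ) α) :
    UnbIn (diagSeq α G D '' Iio α.cof.ord) α := by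
  intro x hx
  obtain ⟨k, hk, hxk⟩ := hG' x hx
  have hk' : Order.succ k < α.cof.ord := (Cardinal.isSuccLimit_ord hα.le).succ_lt hk
  have hspec := diagSeq_spec hα hG hD hk'
  exact ⟨_, mem_image_of_mem _ hk', hxk.trans_lt (hspec.2 k (Order.lt_succ k)).1, hspec.1⟩

theorem closedIn_image_diagSeq (hα : ℵ₀ < α.cof) (hG : ∀ k < α.cof.ord, G k < α)
    (hG' : ∀ x < α, ∃ k < α.cof.ord, x ≤ G k) (hD : ∀ γ < α, ClubIn (D γ) α) :
    ClosedIn (diagSeq α G D '' Iio α.cof.ord) α := by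
  set b := diagSeq α G D
  have hmono := strictMonoOn_diagSeq hα hG hD
  intro β hβ hβ0 hunb
  have hne : {j | j < α.cof.ord ∧ β ≤ b j}.Nonempty := by
    obtain ⟨_, ⟨j, hj, rfl⟩, hβj, -⟩ := unbIn_image_diagSeq hα hG hG' hD β hβ
    exact ⟨j, hj, hβj.le⟩
  obtain ⟨hj₀, hβj₀⟩ : sInf _ < α.cof.ord ∧ β ≤ b (sInf _) := csInf_mem hne
  set j₀ := sInf {j | j < α.cof.ord ∧ β ≤ b j}
  have below : ∀ k < j₀, b k < β := fun k hk =>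
    not_le.1 fun h => (csInf_le' ⟨hk.trans hj₀, h⟩ : j₀ ≤ k).not_gt hk
  refine ⟨j₀, hj₀, le_antisymm (diagSeq_le hβ fun k hk => ⟨?_, below k hk, ?_⟩) hβj₀⟩
  · obtain ⟨_, ⟨m, hm, rfl⟩, hkm, hmβ⟩ := hunb (b k) (below k hk)
    have hkm' : Order.succ k ≤ m :=
      Order.succ_le_of_lt ((hmono.lt_iff_lt (hk.trans hj₀) hm).1 hkm)
    have hk' : Order.succ k < α.cof.ord := hkm'.trans_lt hm
    refine ((diagSeq_spec hα hG hD hk').2 k (Order.lt_succ k)).1.trans_le ?_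
    exact ((hmono.le_iff_le hk' hm).2 hkm').trans hmβ.le
  · have hk₀ := hk.trans hj₀
    refine (hD _ (diagSeq_spec hα hG hD hk₀).1).2.1 β hβ hβ0 fun y hy => ?_
    obtain ⟨_, ⟨m, hm, rfl⟩, hym, hmβ⟩ := hunb (max y (b k)) (max_lt hy (below k hk))
    have hkm : k < m := (hmono.lt_iff_lt hk₀ hm).1 ((le_max_right _ _).trans_lt hym)
    exact ⟨b m, ((diagSeq_spec hα hG hD hm).2 k hkm).2.2, (le_max_left _ _).trans_lt hym, hmβ⟩

end DiagSeq

theorem exists_clubIn_diagonal {α : Ordinal} (hα : ℵ₀ < α.cof) {D : Ordinal → Set Ordinal}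
    (hD : ∀ γ < α, ClubIn (D γ) α) :
    ∃ C, ClubIn C α ∧ ∀ γ ∈ C, ∀ β ∈ C, γ < β → β ∈ D γ := by
  obtain ⟨G, hG, hG'⟩ := exists_cofinal_seq α
  refine ⟨diagSeq α G D '' Iio α.cof.ord, ⟨?_, closedIn_image_diagSeq hα hG hG' hD,
    unbIn_image_diagSeq hα hG hG' hD⟩, ?_⟩
  · rintro _ ⟨j, hj, rfl⟩
    exact (diagSeq_spec hα hG hD hj).1
  · rintro _ ⟨k, hk, rfl⟩ _ ⟨j, hj, rfl⟩ hkj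
    exact ((diagSeq_spec hα hG hD hj).2 k
      (((strictMonoOn_diagSeq hα hG hD).lt_iff_lt hk hj).1 hkj)).2.2

theorem statement9_general (ν κ : Cardinal) (hνu : Cardinal.aleph0 < ν)
    (α : Ordinal) (hακ : α < κ.ord) (hα : α.cof = ν)
    (f : Ordinal → Ordinal) (hf : ∀ β < κ.ord, f β < ν.ord)
    (c : Ordinal → Set Ordinal)
    (hc : ∀ i < ν.ord, ClubIn (c i) α ∧ Disjoint (c i) {β | f β = i}) :
    ∃ C, ClubIn C α ∧ StrictMonoOn f C := by
  have hcof : ℵ₀ < α.cof := hα ▸ hνu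
  have hfα : ∀ γ < α, f γ < ν.ord := fun γ hγ => hf γ (hγ.trans hακ)
  obtain ⟨C, hC, hdiag⟩ := exists_clubIn_diagonal hcof
    (D := fun γ => Iio α ∩ ⋂ i ∈ Iio (Order.succ (f γ)), c i) fun γ hγ => by
      have hsucc : Order.succ (f γ) < ν.ord := (isSuccLimit_ord hνu.le).succ_lt (hfα γ hγ)
      exact clubIn_biInter hcof (hα ▸ Cardinal.lt_ord.1 hsucc) fun i hi => (hc i (hi.trans hsucc)).1
  refine ⟨C, hC, fun γ hγ β hβ hγβ => not_le.1 fun hle => ?_⟩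
  have hβc : β ∈ c (f β) := mem_iInter₂.1 (hdiag γ hγ β hβ hγβ).2 _ (Order.lt_succ_iff.2 hle)
  exact disjoint_left.1 (hc _ (hle.trans_lt (hfα γ (hC.1 hγ)))).2 hβc rfl

theorem statement9 (ν κ : Cardinal) (hν : ν.IsRegular) (hνu : Cardinal.aleph0 < ν)
    (hκ : κ.IsRegular) (hκu : Cardinal.aleph0 < κ) (hνκ : ν < κ)
    (α : Ordinal) (hακ : α < κ.ord) (hα : α.cof = ν)
    (f : Ordinal → Ordinal) (hf : ∀ β < κ.ord, f β < ν.ord)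
    (c : Ordinal → Set Ordinal)
    (hc : ∀ i < ν.ord, ClubIn (c i) α ∧ Disjoint (c i) {β | f β = i}) :
    ∃ C, ClubIn C α ∧ StrictMonoOn f C :=
  statement9_general ν κ hνu α hακ hα f hf c hc
end

section
/- Suppose λ is a singular cardinal and f⃗ = ⟨f_γ | γ < λ⁺⟩ is a scale for λ in a product ∏_{i<cf(λ)} λ_i. Suppose ⟨S_i | i < cf(λ)⟩ is a partition of λ⁺ such that T := E^{λ⁺}_{>cf(λ)} ∩ ⋂_{i<cf(λ)} Tr(S_i) is stationary. Define g_γ(i) := 0 if γ ∈ S_i, and g_γ(i) := f_γ(i) otherwise. Then g⃗ = ⟨g_γ | γ < λ⁺⟩ is a scale for λ, and g⃗ is not very good at any point of T; in particular, g⃗ is not a very good scale. -/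
/-!
Each `γ < λ⁺` lies in exactly one `S_i`, so `g_γ` agrees with `f_γ` from coordinate `i + 1` on
and is pointwise below it; hence `g⃗` is again a scale. At `α ∈ T`, every `S_i` is stationary in
`α`, so any club `C ⊆ α` contains `γ < δ` in `S_i`, where `g_γ(i) = g_δ(i) = 0`: no coordinate
`i` works as a witness that `α` is very good.
-/

open Cardinal Set Ordinal

theorem Cardinal.isSuccLimit_ord_cof_ord {lam : Cardinal} (hlam : ℵ₀ ≤ lam) :
    Order.IsSuccLimit lam.ord.cof.ord :=
  isSuccLimit_ord (aleph0_le_cof_iff.mpr (one_lt_cof_iff.mpr (isSuccLimit_ord hlam)))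

theorem Set.PairwiseDisjoint.exists_forall_notMem_of_mem_biUnion {θ γ : Ordinal}
    {P : Ordinal → Set Ordinal} (hθ : Order.IsSuccLimit θ) (hP : (Iio θ).PairwiseDisjoint P)
    (hγ : γ ∈ ⋃ i ∈ Iio θ, P i) : ∃ i < θ, ∀ j, i ≤ j → j < θ → γ ∉ P j := by
  obtain ⟨i, hi, hγi⟩ := mem_iUnion₂.mp hγ
  refine ⟨Order.succ i, hθ.succ_lt hi, fun j hij hj hγj => ?_⟩
  have hij : i ≠ j := (Order.succ_le_iff.mp hij).ne
  exact disjoint_left.mp (hP hi hj hij) hγi hγj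

theorem IsScale.of_le_of_eventually_eq {lam : Cardinal} {lams : Ordinal → Cardinal}
    {f g : Ordinal → Ordinal → Ordinal} (hf : IsScale lam lams f)
    (hle : ∀ γ < (Order.succ lam).ord, ∀ i < lam.ord.cof.ord, g γ i ≤ f γ i)
    (heq : ∀ γ < (Order.succ lam).ord, ∃ i < lam.ord.cof.ord,
      ∀ j, i ≤ j → j < lam.ord.cof.ord → g γ j = f γ j) :
    IsScale lam lams g := by
  obtain ⟨hreg, hmono, hlt, hcof, hbound, hincr, hdom⟩ := hf
  refine ⟨hreg, hmono, hlt, hcof, fun γ hγ i hi => (hle γ hγ i hi).trans_lt (hbound γ hγ i hi),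
    fun γ hγ δ hδ hγδ => ?_, fun h hh => ?_⟩
  · obtain ⟨i₀, hi₀, hfγδ⟩ := hincr γ hγ δ hδ hγδ
    obtain ⟨i₁, hi₁, hgδ⟩ := heq δ hδ
    refine ⟨max i₀ i₁, max_lt hi₀ hi₁, fun j hij hj => ?_⟩
    calc g γ j ≤ f γ j := hle γ hγ j hj
      _ < f δ j := hfγδ j (le_of_max_le_left hij) hj
      _ = g δ j := (hgδ j (le_of_max_le_right hij) hj).symm
  · obtain ⟨γ, hγ, i₀, hi₀, hhγ⟩ := hdom h hh
    obtain ⟨i₁, hi₁, hgγ⟩ := heq γ hγ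
    refine ⟨γ, hγ, max i₀ i₁, max_lt hi₀ hi₁, fun j hij hj => ?_⟩
    calc h j < f γ j := hhγ j (le_of_max_le_left hij) hj
      _ = g γ j := (hgγ j (le_of_max_le_right hij) hj).symm

theorem ClubIn.inter_Ioi {C : Set Ordinal} {α γ : Ordinal} (hC : ClubIn C α) (hγ : γ < α) :
    ClubIn (C ∩ Ioi γ) α := by
  obtain ⟨hCsub, hCcl, hCunb⟩ := hC
  refine ⟨fun x hx => hCsub hx.1, fun β hβ hβ0 hunb => ⟨hCcl β hβ hβ0 fun x hx => ?_, ?_⟩,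
    fun β hβ => ?_⟩
  · obtain ⟨y, hy, hxy, hyβ⟩ := hunb x hx
    exact ⟨y, hy.1, hxy, hyβ⟩
  · obtain ⟨y, hy, -, hyβ⟩ := hunb 0 hβ0
    exact lt_trans hy.2 hyβ
  · obtain ⟨y, hy, hxy, hyα⟩ := hCunb (max β γ) (max_lt hβ hγ)
    exact ⟨y, ⟨hy, (le_max_right β γ).trans_lt hxy⟩, (le_max_left β γ).trans_lt hxy, hyα⟩

theorem StatIn.mono {S S' : Set Ordinal} {α : Ordinal} (hS : StatIn S α) (h : S ⊆ S') :
    StatIn S' α :=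
  fun C hC => (hS C hC).mono (inter_subset_inter_left C h)

theorem StatIn.exists_lt_of_clubIn {S C : Set Ordinal} {α : Ordinal} (hS : StatIn S α)
    (hC : ClubIn C α) : ∃ γ ∈ S ∩ C, ∃ δ ∈ S ∩ C, γ < δ := by
  obtain ⟨γ, hγS, hγC⟩ := hS C hC
  obtain ⟨δ, hδS, hδC, hγδ⟩ := hS _ (hC.inter_Ioi (hC.1 hγC))
  exact ⟨γ, ⟨hγS, hγC⟩, δ, ⟨hδS, hδC⟩, hγδ⟩

theorem not_veryGoodAt_of_statIn_zero {lam : Cardinal} {g : Ordinal → Ordinal → Ordinal}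
    {α : Ordinal} (h : ∀ i < lam.ord.cof.ord, StatIn {γ | g γ i = 0} α) :
    ¬ VeryGoodAt lam g α := by
  rintro ⟨C, hC, i, hi, hincr⟩
  obtain ⟨γ, ⟨hγ0, hγC⟩, δ, ⟨hδ0, hδC⟩, hγδ⟩ := (h i hi).exists_lt_of_clubIn hC
  have := hincr γ hγC δ hδC hγδ i le_rfl hi
  rw [hγ0, hδ0] at this
  exact this.false

theorem statement12_general (lam : Cardinal) (hlam : Cardinal.aleph0 ≤ lam)
    (lams : Ordinal → Cardinal) (f : Ordinal → Ordinal → Ordinal)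
    (hscale : IsScale lam lams f)
    (P : Ordinal → Set Ordinal)
    (hPdisj : Set.PairwiseDisjoint (Set.Iio lam.ord.cof.ord) P)
    (hPcover : Set.Iio (Order.succ lam).ord ⊆ ⋃ i ∈ Set.Iio lam.ord.cof.ord, P i)
    (hT : StatIn ({α | α < (Order.succ lam).ord ∧ lam.ord.cof < α.cof} ∩
      ⋂ i ∈ Set.Iio lam.ord.cof.ord, Tr (Order.succ lam).ord (P i)) (Order.succ lam).ord)
    (g : Ordinal → Ordinal → Ordinal)
    (hg : ∀ γ i, (γ ∈ P i → g γ i = 0) ∧ (γ ∉ P i → g γ i = f γ i)) :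
    IsScale lam lams g ∧
    (∀ α ∈ {α | α < (Order.succ lam).ord ∧ lam.ord.cof < α.cof} ∩
        ⋂ i ∈ Set.Iio lam.ord.cof.ord, Tr (Order.succ lam).ord (P i),
      ¬ VeryGoodAt lam g α) ∧
    ¬ ∃ D, ClubIn D (Order.succ lam).ord ∧
        ∀ α ∈ D, α.cof ≠ lam.ord.cof → VeryGoodAt lam g α := by
  have hle (γ i : Ordinal) : g γ i ≤ f γ i := by
    by_cases hγ : γ ∈ P i
    · simp only [(hg γ i).1 hγ, zero_le]
    · exact ((hg γ i).2 hγ).le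
  have heq (γ : Ordinal) (hγ : γ < (Order.succ lam).ord) : ∃ i < lam.ord.cof.ord,
      ∀ j, i ≤ j → j < lam.ord.cof.ord → g γ j = f γ j := by
    obtain ⟨i, hi, hγP⟩ := hPdisj.exists_forall_notMem_of_mem_biUnion
      (isSuccLimit_ord_cof_ord hlam) (hPcover hγ)
    exact ⟨i, hi, fun j hij hj => (hg γ j).2 (hγP j hij hj)⟩
  have hnotVeryGood : ∀ α ∈ {α | α < (Order.succ lam).ord ∧ lam.ord.cof < α.cof} ∩
      ⋂ i ∈ Set.Iio lam.ord.cof.ord, Tr (Order.succ lam).ord (P i), ¬ VeryGoodAt lam g α := by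
    rintro α ⟨-, hαTr⟩
    exact not_veryGoodAt_of_statIn_zero fun i hi =>
      (mem_iInter₂.mp hαTr i hi).2.2.mono fun γ hγ => (hg γ i).1 hγ.1
  refine ⟨hscale.of_le_of_eventually_eq (fun γ _ i _ => hle γ i) heq, hnotVeryGood, ?_⟩
  rintro ⟨D, hD, hveryGood⟩
  obtain ⟨α, hαT, hαD⟩ := hT D hD
  exact hnotVeryGood α hαT (hveryGood α hαD hαT.1.2.ne')

theorem statement12 (lam : Cardinal) (hlam : Cardinal.aleph0 ≤ lam) (hsing : ¬lam.IsRegular)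
    (lams : Ordinal → Cardinal) (f : Ordinal → Ordinal → Ordinal)
    (hscale : IsScale lam lams f)
    (P : Ordinal → Set Ordinal)
    (hPsub : ∀ i < lam.ord.cof.ord, P i ⊆ Set.Iio (Order.succ lam).ord)
    (hPdisj : Set.PairwiseDisjoint (Set.Iio lam.ord.cof.ord) P)
    (hPcover : Set.Iio (Order.succ lam).ord ⊆ ⋃ i ∈ Set.Iio lam.ord.cof.ord, P i)
    (hT : StatIn ({α | α < (Order.succ lam).ord ∧ lam.ord.cof < α.cof} ∩
      ⋂ i ∈ Set.Iio lam.ord.cof.ord, Tr (Order.succ lam).ord (P i)) (Order.succ lam).ord)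
    (g : Ordinal → Ordinal → Ordinal)
    (hg : ∀ γ i, (γ ∈ P i → g γ i = 0) ∧ (γ ∉ P i → g γ i = f γ i)) :
    IsScale lam lams g ∧
    (∀ α ∈ {α | α < (Order.succ lam).ord ∧ lam.ord.cof < α.cof} ∩
        ⋂ i ∈ Set.Iio lam.ord.cof.ord, Tr (Order.succ lam).ord (P i),
      ¬ VeryGoodAt lam g α) ∧
    ¬ ∃ D, ClubIn D (Order.succ lam).ord ∧
        ∀ α ∈ D, α.cof ≠ lam.ord.cof → VeryGoodAt lam g α :=
  statement12_general lam hlam lams f hscale P hPdisj hPcover hT g hg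
end
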